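/- Let n ≥ 2 and let J > 0, h > 0 be such that h/J is not an integer and h/J < n−1. For the Glauber energy landscape on the complete graph K_n, the energy barrier equals Γ* = n*·(J·(n−n*) − h), where n* = ⌈(n−1−h/J)/2⌉. -/

import Mathlib

/-- Spin value of a Boolean: `+1` for `true`, `−1` for `false`. -/
def spin (b : Bool) : ℝ := if b then 1 else -1

/-- The product of the spins at the two endpoints of an unoriented edge. -/
noncomputable def edgeEnergy {V : Type*} (σ : V → Bool) : Sym2 V → ℝ :=
  Sym2.lift ⟨fun v w => spin (σ v) * spin (σ w), fun v w => by ring⟩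

/-- The Hamiltonian `H(σ) = −(J/2)·Σ_{(v,w)∈E} σ(v)σ(w) − (h/2)·Σ_v σ(v)` of a
multigraph with edge multiset `E` (edges counted with multiplicity). -/
noncomputable def hamiltonian {V : Type*} [Fintype V] (J h : ℝ)
    (E : Multiset (Sym2 V)) (σ : V → Bool) : ℝ :=
  -(J/2) * (E.map (edgeEnergy σ)).sum - (h/2) * ∑ v, spin (σ v)

/-- Two spin configurations differ at exactly one vertex. -/
def IsFlipStep {V : Type*} [DecidableEq V] (σ τ : V → Bool) : Prop :=
  ∃ v, τ = Function.update σ v (! σ v)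

/-- The communication height `Φ(ξ,ζ)`: the minimum over paths `γ : ξ → ζ` of
single spin-flips of the maximal energy along the path. -/
noncomputable def commHeight {V : Type*} [Fintype V] [DecidableEq V]
    (H : (V → Bool) → ℝ) (ξ ζ : V → Bool) : ℝ :=
  sInf { M : ℝ | ∃ (k : ℕ) (γ : Fin (k+1) → (V → Bool)),
    γ 0 = ξ ∧ γ (Fin.last k) = ζ ∧
    (∀ i : Fin k, IsFlipStep (γ i.castSucc) (γ i.succ)) ∧
    M = Finset.univ.sup' ⟨0, Finset.mem_univ 0⟩ (fun i => H (γ i)) }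

/-- The energy barrier `Γ* = Φ(⊟,⊞) − H(⊟)` of an energy landscape `H` on spin
configurations. -/
noncomputable def gammaStar {V : Type*} [Fintype V] [DecidableEq V]
    (H : (V → Bool) → ℝ) : ℝ :=
  commHeight H (fun _ => false) (fun _ => true) - H (fun _ => false)


/-- The edge multiset of the complete graph `K_n` on `Fin n`: all non-diagonal
unordered pairs, each once. -/
def completeEdges (n : ℕ) : Multiset (Sym2 (Fin n)) :=
  (Finset.univ.filter (fun e : Sym2 (Fin n) => ¬ e.IsDiag)).val

/-! On `K_n` the energy of a configuration depends only on its number `k` of up spins: it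
exceeds `H(⊟)` by `k (J (n - k) - h)`. A spin flip raises `k` by at most one, so every path from
`⊟` to `⊞` passes through every level `k ≤ n`, while flipping the vertices one at a time visits
each level once. Hence `Γ*` is the maximum of the concave quadratic `k (J (n - k) - h)` over the
integers, which is attained at `k = ⌈(n - 1 - h/J) / 2⌉`. -/

open Finset

section Configurations

variable {V : Type*} [Fintype V]

def upCount (σ : V → Bool) : ℕ := #{v | σ v = true}

lemma sum_spin (σ : V → Bool) : ∑ v, spin (σ v) = 2 * (upCount σ : ℝ) - Fintype.card V := by
  have hspin : ∀ v, spin (σ v) = 2 * (if σ v = true then 1 else 0) - 1 := by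
    intro v; cases σ v <;> norm_num [spin]
  simp only [hspin, sum_sub_distrib, ← mul_sum, sum_boole, upCount, sum_const, card_univ,
    nsmul_eq_mul, mul_one]

lemma upCount_false : upCount (fun _ : V => false) = 0 := by simp [upCount]

lemma upCount_true : upCount (fun _ : V => true) = Fintype.card V := by simp [upCount]

noncomputable def thresholdPath (V : Type*) [Fintype V] : Fin (Fintype.card V + 1) → V → Bool :=
  fun j v => decide ((Fintype.equivFin V v : ℕ) < j)

lemma upCount_thresholdPath (j : Fin (Fintype.card V + 1)) : upCount (thresholdPath V j) = j := by
  have : #{v | ((Fintype.equivFin V v : ℕ) < j)} = #{i : Fin (Fintype.card V) | (i : ℕ) < j} :=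
    card_equiv (Fintype.equivFin V) (by simp)
  simpa [upCount, thresholdPath, Fin.card_filter_val_lt, j.is_le] using this

variable [DecidableEq V]

lemma sum_offDiag_sym2_eq_two_nsmul {M : Type*} [AddCommMonoid M] (f : Sym2 V → M) :
    ∑ p ∈ (univ : Finset V).offDiag, f s(p.1, p.2) = 2 • ∑ z with ¬ z.IsDiag, f z := by
  have himage : (univ : Finset V).offDiag.image (fun p => s(p.1, p.2)) =
      ({z | ¬ z.IsDiag} : Finset (Sym2 V)) := by
    ext z; induction z using Sym2.ind with
    | _ a b =>
      simp only [mem_image, mem_offDiag, mem_univ, true_and, Prod.exists, Sym2.eq_iff, mem_filter,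
        Sym2.mk_isDiag_iff]
      exact ⟨fun ⟨x, y, hxy, h⟩ => by aesop, fun h => ⟨a, b, h, by simp⟩⟩
  have hfiber : ∀ z ∈ ({z | ¬ z.IsDiag} : Finset (Sym2 V)),
      #{p ∈ (univ : Finset V).offDiag | s(p.1, p.2) = z} = 2 := by
    intro z hz; induction z using Sym2.ind with
    | _ a b =>
      have hab : a ≠ b := by simpa using hz
      rw [card_eq_two]
      refine ⟨(a, b), (b, a), by simp [hab], ?_⟩
      ext ⟨x, y⟩
      aesop
  rw [sum_comp, himage, smul_sum]
  exact sum_congr rfl fun z hz => by rw [hfiber z hz]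

lemma two_mul_sum_edgeEnergy (σ : V → Bool) :
    2 * ∑ z with ¬ z.IsDiag, edgeEnergy σ z = (∑ v, spin (σ v)) ^ 2 - Fintype.card V := by
  have hsq : ∀ v, spin (σ v) * spin (σ v) = 1 := fun v => by cases σ v <;> norm_num [spin]
  rw [two_mul, ← two_nsmul, ← sum_offDiag_sym2_eq_two_nsmul, sq, sum_mul_sum, ← sum_product',
    ← diag_union_offDiag, sum_union (disjoint_diag_offDiag _), sum_diag]
  simp [edgeEnergy, hsq]

end Configurations

lemma exists_apply_eq_of_le_add_one :
    ∀ {k : ℕ} {f : Fin (k + 1) → ℕ}, (∀ i : Fin k, f i.succ ≤ f i.castSucc + 1) →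
      ∀ {m : ℕ}, f 0 ≤ m → m ≤ f (Fin.last k) → ∃ i, f i = m
  | 0, _, _, _, h0, hm => ⟨0, le_antisymm h0 hm⟩
  | k + 1, f, hf, m, h0, hm => by
    by_cases hlt : m ≤ f (Fin.last k).castSucc
    · obtain ⟨i, hi⟩ := exists_apply_eq_of_le_add_one (f := f ∘ Fin.castSucc)
        (fun i => hf i.castSucc) h0 hlt
      exact ⟨i.castSucc, hi⟩
    · have := hf (Fin.last k)
      exact ⟨Fin.last (k + 1), by simp only [Fin.succ_last, Nat.succ_eq_add_one] at this; omega⟩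

section Paths

variable {V : Type*} [DecidableEq V]

def IsFlipPath {k : ℕ} (γ : Fin (k + 1) → V → Bool) (ξ ζ : V → Bool) : Prop :=
  γ 0 = ξ ∧ γ (Fin.last k) = ζ ∧ ∀ i : Fin k, IsFlipStep (γ i.castSucc) (γ i.succ)

variable [Fintype V] {H : (V → Bool) → ℝ} {ξ ζ : V → Bool} {M : ℝ}

lemma commHeight_le {k : ℕ} {γ : Fin (k + 1) → V → Bool} (hγ : IsFlipPath γ ξ ζ)
    (hM : ∀ i, H (γ i) ≤ M) : commHeight H ξ ζ ≤ M := by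
  unfold commHeight
  refine le_trans (csInf_le ⟨H ξ, ?_⟩ ⟨k, γ, hγ.1, hγ.2.1, hγ.2.2, rfl⟩)
    (sup'_le _ _ fun i _ => hM i)
  rintro _ ⟨k, γ, h0, -, -, rfl⟩
  exact h0 ▸ le_sup' (fun i => H (γ i)) (mem_univ 0)

lemma le_commHeight {k₀ : ℕ} {γ₀ : Fin (k₀ + 1) → V → Bool} (hγ₀ : IsFlipPath γ₀ ξ ζ)
    (hM : ∀ (k : ℕ) (γ : Fin (k + 1) → V → Bool), IsFlipPath γ ξ ζ → ∃ i, M ≤ H (γ i)) :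
    M ≤ commHeight H ξ ζ := by
  refine le_csInf ⟨_, k₀, γ₀, hγ₀.1, hγ₀.2.1, hγ₀.2.2, rfl⟩ ?_
  rintro _ ⟨k, γ, h0, h1, hstep, rfl⟩
  obtain ⟨i, hi⟩ := hM k γ ⟨h0, h1, hstep⟩
  exact hi.trans (le_sup' (fun i => H (γ i)) (mem_univ i))

lemma IsFlipStep.upCount_le {σ τ : V → Bool} (hστ : IsFlipStep σ τ) :
    upCount τ ≤ upCount σ + 1 := by
  obtain ⟨v, rfl⟩ := hστ
  calc upCount (Function.update σ v !σ v)
      ≤ #(insert v ({w | σ w = true} : Finset V)) := card_le_card fun w hw => by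
        rcases eq_or_ne w v with rfl | hwv
        · exact mem_insert_self _ _
        · exact mem_insert_of_mem (by simpa [Function.update_of_ne hwv] using hw)
    _ ≤ upCount σ + 1 := card_insert_le _ _

lemma IsFlipPath.exists_upCount_eq {k : ℕ} {γ : Fin (k + 1) → V → Bool}
    (hγ : IsFlipPath γ (fun _ => false) (fun _ => true)) {m : ℕ} (hm : m ≤ Fintype.card V) :
    ∃ i, upCount (γ i) = m :=
  exists_apply_eq_of_le_add_one (fun i => (hγ.2.2 i).upCount_le)
    (by rw [hγ.1, upCount_false]; exact m.zero_le) (by rwa [hγ.2.1, upCount_true])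

lemma isFlipPath_thresholdPath :
    IsFlipPath (thresholdPath V) (fun _ => false) (fun _ => true) := by
  refine ⟨by ext; simp [thresholdPath], by ext; simp [thresholdPath], fun i => ?_⟩
  refine ⟨(Fintype.equivFin V).symm i, funext fun v => ?_⟩
  rcases eq_or_ne v ((Fintype.equivFin V).symm i) with rfl | hv
  · simp [thresholdPath]
  · have : (Fintype.equivFin V v : ℕ) ≠ i := fun h => hv (by
      rw [Equiv.eq_symm_apply]; exact Fin.ext h)
    simp only [thresholdPath, Function.update_of_ne hv, Fin.val_succ, Fin.val_castSucc]
    grind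

lemma commHeight_eq_of_upCount (F : ℕ → ℝ) (hH : ∀ σ, H σ = F (upCount σ)) {m : ℕ}
    (hm : m ≤ Fintype.card V) (hmax : ∀ k ≤ Fintype.card V, F k ≤ F m) :
    commHeight H (fun _ => false) (fun _ => true) = F m := by
  refine le_antisymm (commHeight_le isFlipPath_thresholdPath fun j => ?_)
    (le_commHeight isFlipPath_thresholdPath fun k γ hγ => ?_)
  · rw [hH, upCount_thresholdPath]
    exact hmax j (Nat.lt_succ_iff.mp j.is_lt)
  · obtain ⟨i, hi⟩ := hγ.exists_upCount_eq hm
    exact ⟨i, by rw [hH, hi]⟩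

end Paths

lemma hamiltonian_completeEdges (J h : ℝ) {n : ℕ} (σ : Fin n → Bool) :
    hamiltonian J h (completeEdges n) σ = hamiltonian J h (completeEdges n) (fun _ => false) +
      upCount σ * (J * (n - upCount σ) - h) := by
  have hedges : ∀ τ : Fin n → Bool,
      2 * ((completeEdges n).map (edgeEnergy τ)).sum = (∑ v, spin (τ v)) ^ 2 - n := fun τ =>
    (two_mul_sum_edgeEnergy τ).trans (by rw [Fintype.card_fin])
  have hσ := hedges σ
  have hfalse := hedges fun _ => false
  unfold hamiltonian
  simp only [sum_spin, upCount_false, Fintype.card_fin, Nat.cast_zero] at hσ hfalse ⊢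
  linear_combination (-J / 4) * (hσ - hfalse)

lemma intCast_mul_sub_le_ceil_mul_sub {J : ℝ} (hJ : 0 < J) (c h : ℝ) (k : ℤ) :
    k * (J * (c - k) - h) ≤
      ⌈(c - 1 - h / J) / 2⌉ * (J * (c - ⌈(c - 1 - h / J) / 2⌉) - h) := by
  set N := ⌈(c - 1 - h / J) / 2⌉
  have hdiff : N * (J * (c - N) - h) - k * (J * (c - k) - h) =
      (N - k) * (J * (c - N - k) - h) := by ring
  have hhJ : h / J * J = h := div_mul_cancel₀ h hJ.ne'
  have hNlo : J * (c - 1) - h ≤ 2 * J * N := by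
    have := Int.le_ceil ((c - 1 - h / J) / 2)
    nlinarith
  have hNhi : 2 * J * N < J * (c + 1) - h := by
    have := Int.ceil_lt_add_one ((c - 1 - h / J) / 2)
    nlinarith
  rcases (by omega : k ≤ N - 1 ∨ k = N ∨ N + 1 ≤ k) with hk | rfl | hk
  · have hk' : (k : ℝ) ≤ N - 1 := by exact_mod_cast hk
    nlinarith [mul_nonneg hJ.le (by linarith : (0 : ℝ) ≤ N - 1 - k)]
  · exact le_rfl
  · have hk' : (N : ℝ) + 1 ≤ k := by exact_mod_cast hk
    nlinarith [mul_nonneg hJ.le (by linarith : (0 : ℝ) ≤ k - N - 1)]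

theorem stmt3_general (n : ℕ) (J h : ℝ) (hJ : 0 < J) (hh : 0 < h)
    (hlt : h / J < (n : ℝ) - 1) :
    gammaStar (hamiltonian J h (completeEdges n)) =
      (⌈((n : ℝ) - 1 - h / J) / 2⌉ : ℝ) *
        (J * ((n : ℝ) - (⌈((n : ℝ) - 1 - h / J) / 2⌉ : ℝ)) - h) := by
  obtain ⟨m, hm⟩ : ∃ m : ℕ, ⌈((n : ℝ) - 1 - h / J) / 2⌉ = m :=
    Int.eq_ofNat_of_zero_le (Int.ceil_nonneg (by linarith))
  have hmn : m ≤ n := by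
    have : ⌈((n : ℝ) - 1 - h / J) / 2⌉ ≤ n :=
      Int.ceil_le.2 (by have := div_pos hh hJ; push_cast; linarith)
    omega
  have hmax : ∀ k : ℕ, (k : ℝ) * (J * (n - k) - h) ≤ m * (J * (n - m) - h) := fun k => by
    simpa [hm] using intCast_mul_sub_le_ceil_mul_sub hJ n h k
  rw [gammaStar, commHeight_eq_of_upCount _ (hamiltonian_completeEdges J h)
    (by simpa using hmn) (fun k _ => add_le_add_right (hmax k) _), hm]
  push_cast
  ring

/-- Let `n ≥ 2` and `J > 0`, `h > 0` with `h/J` not an integer and `h/J < n−1`.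
For the Glauber energy landscape on the complete graph `K_n`, the energy barrier
equals `Γ* = n*·(J·(n−n*) − h)`, where `n* = ⌈(n−1−h/J)/2⌉`. -/
theorem stmt3 (n : ℕ) (hn : 2 ≤ n) (J h : ℝ) (hJ : 0 < J) (hh : 0 < h)
    (hint : ∀ z : ℤ, h / J ≠ (z : ℝ)) (hlt : h / J < (n : ℝ) - 1) :
    gammaStar (hamiltonian J h (completeEdges n)) =
      (⌈((n : ℝ) - 1 - h / J) / 2⌉ : ℝ) *
        (J * ((n : ℝ) - (⌈((n : ℝ) - 1 - h / J) / 2⌉ : ℝ)) - h) :=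
  stmt3_general n J h hJ hh hlt
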